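/- arXiv:1711.05377 — 2 statements merged into one kernel-verified Lean document; each statement's English description precedes it below -/
import Mathlib

section
/- Let (Ω, F, μ) be a probability space, p > 1, and K ≥ 0. Let R_φ, R₁, R̃_φ, R̃₁ : Ω → ℝ be measurable with R₁ > 0 and R̃₁ > 0 μ-almost surely and with |R_φ| ≤ K·R₁ μ-almost surely. Assume |R_φ − R̃_φ|^{2p}, |R₁ − R̃₁|^{2p}, and R̃₁^{-2p} are μ-integrable. Then E_μ |R_φ/R₁ − R̃_φ/R̃₁|^p ≤ 2^{p−1} [ (E_μ|R_φ − R̃_φ|^{2p})^{1/2} + K^p (E_μ|R₁ − R̃₁|^{2p})^{1/2} ] · (E_μ R̃₁^{-2p})^{1/2}. (This is the core decomposition in the proof of Theorem 4.5, converting bounds on the nonnormalized filters ρ_t^ε, ρ̃_t^ε into a bound on the normalized filters π_t^ε(φ) = ρ_t^ε(φ)/ρ_t^ε(1) and π̃_t^ε(φ) = ρ̃_t^ε(φ)/ρ̃_t^ε(1).) -/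
/-! Writing `π = ρ(φ)/ρ(1)` and `π̃ = ρ̃(φ)/ρ̃(1)`,
`π − π̃ = (ρ(φ) − ρ̃(φ))/ρ̃(1) − π · (ρ(1) − ρ̃(1))/ρ̃(1)` with `|π| ≤ K`, so pointwise
`|π − π̃|^p ≤ 2^{p−1} (|ρ(φ) − ρ̃(φ)|^p + K^p |ρ(1) − ρ̃(1)|^p) ρ̃(1)^{−p}` by convexity of `t ↦ t^p`.
Integrating and applying Cauchy–Schwarz to each of the two products gives the bound. -/

open MeasureTheory Real

namespace Real

theorem add_rpow_le_two_rpow_mul_add_rpow {a b q : ℝ} (ha : 0 ≤ a) (hb : 0 ≤ b) (hq : 1 ≤ q) :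
    (a + b) ^ q ≤ 2 ^ (q - 1) * (a ^ q + b ^ q) := by
  have h := NNReal.rpow_add_le_mul_rpow_add_rpow ⟨a, ha⟩ ⟨b, hb⟩ hq
  exact_mod_cast h

theorem abs_div_sub_div_le {a b c d K : ℝ} (hb : 0 < b) (hd : 0 < d) (hab : |a| ≤ K * b) :
    |a / b - c / d| ≤ (|a - c| + K * |b - d|) / d := by
  have hquot : |a / b| ≤ K := by rwa [abs_div, abs_of_pos hb, div_le_iff₀ hb]
  calc |a / b - c / d| = |(a - c) / d - a / b * ((b - d) / d)| := by
        congr 1; field_simp; ring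
    _ ≤ |(a - c) / d| + |a / b| * |(b - d) / d| := by rw [← abs_mul]; exact abs_sub _ _
    _ ≤ |a - c| / d + K * (|b - d| / d) := by
        rw [abs_div (a - c), abs_div (b - d), abs_of_pos hd]; gcongr
    _ = (|a - c| + K * |b - d|) / d := by ring

theorem abs_div_sub_div_rpow_le {a b c d K p : ℝ} (hp : 1 ≤ p) (hb : 0 < b) (hd : 0 < d)
    (hab : |a| ≤ K * b) :
    |a / b - c / d| ^ p
      ≤ 2 ^ (p - 1) * (|a - c| ^ p * d ^ (-p) + K ^ p * (|b - d| ^ p * d ^ (-p))) := by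
  have hK : 0 ≤ K := nonneg_of_mul_nonneg_left ((abs_nonneg a).trans hab) hb
  calc |a / b - c / d| ^ p ≤ ((|a - c| + K * |b - d|) / d) ^ p := by
        gcongr; exact abs_div_sub_div_le hb hd hab
    _ = (|a - c| + K * |b - d|) ^ p * d ^ (-p) := by
        rw [div_rpow (by positivity) hd.le, rpow_neg hd.le, div_eq_mul_inv]
    _ ≤ 2 ^ (p - 1) * (|a - c| ^ p + (K * |b - d|) ^ p) * d ^ (-p) := by
        gcongr; exact add_rpow_le_two_rpow_mul_add_rpow (by positivity) (by positivity) hp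
    _ = 2 ^ (p - 1) * (|a - c| ^ p * d ^ (-p) + K ^ p * (|b - d| ^ p * d ^ (-p))) := by
        rw [mul_rpow hK (abs_nonneg _)]; ring

end Real

section CauchySchwarz

variable {α : Type*} {mα : MeasurableSpace α} {μ : Measure α} {f g : α → ℝ} {q r : ℝ}

theorem memLp_two_rpow_of_integrable_rpow_two_mul (hf : 0 ≤ᵐ[μ] f)
    (hfi : Integrable (fun x => f x ^ (2 * q)) μ) : MemLp (fun x => f x ^ q) 2 μ := by
  have hsqrt : (fun x => (f x ^ (2 * q)) ^ (1 / 2 : ℝ)) =ᵐ[μ] fun x => f x ^ q :=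
    hf.mono fun x hx => by simp only [← rpow_mul hx]; ring_nf
  have hsq : (fun x => f x ^ (2 * q)) =ᵐ[μ] fun x => (f x ^ q) ^ 2 :=
    hf.mono fun x hx => by simp only [mul_comm 2 q, rpow_mul hx, rpow_two]
  refine (memLp_two_iff_integrable_sq ?_).2 (hfi.congr hsq)
  exact (hfi.aemeasurable.pow_const _).aestronglyMeasurable.congr hsqrt

theorem integrable_rpow_mul_rpow (hf : 0 ≤ᵐ[μ] f) (hg : 0 ≤ᵐ[μ] g)
    (hfi : Integrable (fun x => f x ^ (2 * q)) μ) (hgi : Integrable (fun x => g x ^ (2 * r)) μ) :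
    Integrable (fun x => f x ^ q * g x ^ r) μ :=
  (memLp_two_rpow_of_integrable_rpow_two_mul hf hfi).integrable_mul
    (memLp_two_rpow_of_integrable_rpow_two_mul hg hgi)

theorem integral_rpow_mul_rpow_le (hf : 0 ≤ᵐ[μ] f) (hg : 0 ≤ᵐ[μ] g)
    (hfi : Integrable (fun x => f x ^ (2 * q)) μ) (hgi : Integrable (fun x => g x ^ (2 * r)) μ) :
    ∫ x, f x ^ q * g x ^ r ∂μ
      ≤ (∫ x, f x ^ (2 * q) ∂μ) ^ (1 / 2 : ℝ) * (∫ x, g x ^ (2 * r) ∂μ) ^ (1 / 2 : ℝ) := by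
  have hsq {h : α → ℝ} {s : ℝ} (hh : 0 ≤ᵐ[μ] h) :
      ∫ x, (h x ^ s) ^ (2 : ℝ) ∂μ = ∫ x, h x ^ (2 * s) ∂μ :=
    integral_congr_ae (hh.mono fun x hx => by simp only [← rpow_mul hx, mul_comm])
  have h := integral_mul_le_Lp_mul_Lq_of_nonneg HolderConjugate.two_two
    (hf.mono fun x hx => rpow_nonneg hx q) (hg.mono fun x hx => rpow_nonneg hx r)
    (by simpa using memLp_two_rpow_of_integrable_rpow_two_mul hf hfi)
    (by simpa using memLp_two_rpow_of_integrable_rpow_two_mul hg hgi)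
  rwa [hsq hf, hsq hg] at h

end CauchySchwarz

theorem normalized_filter_difference_bound_general
    {Ω : Type*} {mΩ : MeasurableSpace Ω} (μ : Measure Ω)
    (p K : ℝ) (hp : 1 < p) (hK : 0 ≤ K)
    (Rφ R₁ Rtφ Rt₁ : Ω → ℝ)
    (hR₁pos : ∀ᵐ ω ∂μ, 0 < R₁ ω) (hRt₁pos : ∀ᵐ ω ∂μ, 0 < Rt₁ ω)
    (hdom : ∀ᵐ ω ∂μ, |Rφ ω| ≤ K * R₁ ω)
    (hint1 : Integrable (fun ω => |Rφ ω - Rtφ ω| ^ (2 * p)) μ)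
    (hint2 : Integrable (fun ω => |R₁ ω - Rt₁ ω| ^ (2 * p)) μ)
    (hint3 : Integrable (fun ω => (Rt₁ ω) ^ (-(2 * p))) μ) :
    ∫ ω, |Rφ ω / R₁ ω - Rtφ ω / Rt₁ ω| ^ p ∂μ
      ≤ (2 : ℝ) ^ (p - 1) *
        ((∫ ω, |Rφ ω - Rtφ ω| ^ (2 * p) ∂μ) ^ (1/2 : ℝ)
          + K ^ p * (∫ ω, |R₁ ω - Rt₁ ω| ^ (2 * p) ∂μ) ^ (1/2 : ℝ)) *
        (∫ ω, (Rt₁ ω) ^ (-(2 * p)) ∂μ) ^ (1/2 : ℝ) := by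
  have hpt : ∀ᵐ ω ∂μ, |Rφ ω / R₁ ω - Rtφ ω / Rt₁ ω| ^ p ≤ 2 ^ (p - 1) *
      (|Rφ ω - Rtφ ω| ^ p * Rt₁ ω ^ (-p) + K ^ p * (|R₁ ω - Rt₁ ω| ^ p * Rt₁ ω ^ (-p))) := by
    filter_upwards [hR₁pos, hRt₁pos, hdom] with ω h₁ ht₁ hω
    exact abs_div_sub_div_rpow_le hp.le h₁ ht₁ hω
  have habsφ : 0 ≤ᵐ[μ] fun ω => |Rφ ω - Rtφ ω| := ae_of_all _ fun _ => abs_nonneg _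
  have habs₁ : 0 ≤ᵐ[μ] fun ω => |R₁ ω - Rt₁ ω| := ae_of_all _ fun _ => abs_nonneg _
  have hRt₁nonneg : 0 ≤ᵐ[μ] Rt₁ := hRt₁pos.mono fun _ h => h.le
  have hint3' : Integrable (fun ω => Rt₁ ω ^ (2 * -p)) μ := by simpa only [mul_neg] using hint3
  have hφ := integrable_rpow_mul_rpow habsφ hRt₁nonneg hint1 hint3'
  have h₁ := integrable_rpow_mul_rpow habs₁ hRt₁nonneg hint2 hint3'
  calc ∫ ω, |Rφ ω / R₁ ω - Rtφ ω / Rt₁ ω| ^ p ∂μ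
      ≤ ∫ ω, 2 ^ (p - 1) * (|Rφ ω - Rtφ ω| ^ p * Rt₁ ω ^ (-p)
          + K ^ p * (|R₁ ω - Rt₁ ω| ^ p * Rt₁ ω ^ (-p))) ∂μ :=
        integral_mono_of_nonneg (ae_of_all _ fun _ => by positivity)
          ((hφ.add (h₁.const_mul _)).const_mul _) hpt
    _ = 2 ^ (p - 1) * (∫ ω, |Rφ ω - Rtφ ω| ^ p * Rt₁ ω ^ (-p) ∂μ
          + K ^ p * ∫ ω, |R₁ ω - Rt₁ ω| ^ p * Rt₁ ω ^ (-p) ∂μ) := by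
        rw [integral_const_mul, integral_add hφ (h₁.const_mul _), integral_const_mul]
    _ ≤ 2 ^ (p - 1) * ((∫ ω, |Rφ ω - Rtφ ω| ^ (2 * p) ∂μ) ^ (1/2 : ℝ)
            * (∫ ω, (Rt₁ ω) ^ (-(2 * p)) ∂μ) ^ (1/2 : ℝ)
          + K ^ p * ((∫ ω, |R₁ ω - Rt₁ ω| ^ (2 * p) ∂μ) ^ (1/2 : ℝ)
            * (∫ ω, (Rt₁ ω) ^ (-(2 * p)) ∂μ) ^ (1/2 : ℝ))) := by
        gcongr
        · simpa only [mul_neg] using integral_rpow_mul_rpow_le habsφ hRt₁nonneg hint1 hint3'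
        · simpa only [mul_neg] using integral_rpow_mul_rpow_le habs₁ hRt₁nonneg hint2 hint3'
    _ = _ := by ring

/-- Core decomposition in the proof of Theorem 4.5: converting bounds on the
nonnormalized filters into a bound on the normalized filters
`π(φ) = ρ(φ)/ρ(1)` and `π̃(φ) = ρ̃(φ)/ρ̃(1)`. -/
theorem normalized_filter_difference_bound
    {Ω : Type*} {mΩ : MeasurableSpace Ω} (μ : Measure Ω) [IsProbabilityMeasure μ]
    (p K : ℝ) (hp : 1 < p) (hK : 0 ≤ K)
    (Rφ R₁ Rtφ Rt₁ : Ω → ℝ)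
    (hRφ : Measurable Rφ) (hR₁ : Measurable R₁) (hRtφ : Measurable Rtφ) (hRt₁ : Measurable Rt₁)
    (hR₁pos : ∀ᵐ ω ∂μ, 0 < R₁ ω) (hRt₁pos : ∀ᵐ ω ∂μ, 0 < Rt₁ ω)
    (hdom : ∀ᵐ ω ∂μ, |Rφ ω| ≤ K * R₁ ω)
    (hint1 : Integrable (fun ω => |Rφ ω - Rtφ ω| ^ (2 * p)) μ)
    (hint2 : Integrable (fun ω => |R₁ ω - Rt₁ ω| ^ (2 * p)) μ)
    (hint3 : Integrable (fun ω => (Rt₁ ω) ^ (-(2 * p))) μ) :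
    ∫ ω, |Rφ ω / R₁ ω - Rtφ ω / Rt₁ ω| ^ p ∂μ
      ≤ (2 : ℝ) ^ (p - 1) *
        ((∫ ω, |Rφ ω - Rtφ ω| ^ (2 * p) ∂μ) ^ (1/2 : ℝ)
          + K ^ p * (∫ ω, |R₁ ω - Rt₁ ω| ^ (2 * p) ∂μ) ^ (1/2 : ℝ)) *
        (∫ ω, (Rt₁ ω) ^ (-(2 * p)) ∂μ) ^ (1/2 : ℝ) :=
  normalized_filter_difference_bound_general (mΩ := mΩ) μ p K hp hK Rφ R₁ Rtφ Rt₁ hR₁pos hRt₁pos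
    hdom hint1 hint2 hint3
end

section
/- Let ε > 0 and let ω : ℝ → ℝ be continuous with ω(0) = 0 and of at most linear growth: there is a constant C ≥ 0 with |ω(t)| ≤ C(1 + |t|) for all t ∈ ℝ. For t ∈ ℝ define the shifted path (θ_t ω)(s) := ω(s + t) − ω(t), and define ξ^ε(ω) := −ε^{−3/2} ∫_{−∞}^0 e^{s/ε} ω(s) ds (the integral converges absolutely). Then for every t ∈ ℝ, ξ^ε(θ_t ω) = ξ^ε(ω) − (1/ε) ∫₀^t ξ^ε(θ_s ω) ds + (1/√ε) ω(t). In other words, the process t ↦ ξ^ε(θ_t ω) is a pathwise solution of the integral form of the fast linear equation dξ^ε = −(1/ε) ξ^ε dt + (1/√ε) dW along the driving path ω, defined for all time. -/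
/-! Substituting `u = s + t`, the part `ω (s + t)` of `θ_t ω` contributes
`g t = e^{-t/ε} ∫_{-∞}^t e^{u/ε} ω u du` and the constant `ω t` contributes `ε ω t`, so that
`ξ^ε(θ_t ω) = -ε^{-3/2} g t + ω t / √ε`, and `ξ^ε(ω) = -ε^{-3/2} g 0`. By the fundamental
theorem of calculus `g` solves `g' = -g/ε + ω`; integrating this equation over `[0, t]` is the
claimed identity. -/

open MeasureTheory Real

/-- The Wiener shift `(θ_t ω)(s) = ω(s + t) − ω(t)` on scalar paths. -/
def wienerShift (t : ℝ) (ω : ℝ → ℝ) : ℝ → ℝ := fun s => ω (s + t) - ω t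

/-- The stationary-solution functional
`ξ^ε(ω) = −ε^{−3/2} ∫_{−∞}^0 e^{s/ε} ω(s) ds` of the fast equation from Section 5. -/
noncomputable def xiMap (ε : ℝ) (ω : ℝ → ℝ) : ℝ :=
  -(ε ^ (-(3 / 2 : ℝ))) * ∫ s in Set.Iio (0 : ℝ), Real.exp (s / ε) * ω s

open Set

noncomputable def expConvolution (ε : ℝ) (ω : ℝ → ℝ) (t : ℝ) : ℝ :=
  exp (-t / ε) * ∫ u in Iic t, exp (u / ε) * ω u

lemma one_add_abs_le_mul_exp {δ : ℝ} (hδ : 0 < δ) (x : ℝ) :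
    1 + |x| ≤ (1 + δ⁻¹) * exp (δ * |x|) := by
  have hexp := add_one_le_exp (δ * |x|)
  calc 1 + |x| ≤ (1 + δ⁻¹) * (δ * |x| + 1) := by
        have : δ⁻¹ * δ = 1 := inv_mul_cancel₀ hδ.ne'
        nlinarith [abs_nonneg x, inv_pos.2 hδ]
    _ ≤ (1 + δ⁻¹) * exp (δ * |x|) := by gcongr

lemma integrableOn_exp_div_mul_Iic {ε D : ℝ} (hε : 0 < ε) {f : ℝ → ℝ}
    (hf : AEStronglyMeasurable f) (hfD : ∀ u, |f u| ≤ D * (1 + |u|)) (t : ℝ) :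
    IntegrableOn (fun u => exp (u / ε) * f u) (Iic t) := by
  have hD : 0 ≤ D := by simpa using (abs_nonneg _).trans (hfD 0)
  have h2ε : 0 < (2 * ε)⁻¹ := by positivity
  refine ((integrableOn_exp_mul_Iic h2ε t).const_mul (D * (1 + 2 * ε) * exp (|t| / ε))).mono'
    ((continuous_exp.comp (continuous_id.div_const ε)).aestronglyMeasurable.mul hf).restrict ?_
  rw [ae_restrict_iff' measurableSet_Iic]
  refine .of_forall fun u (hu : u ≤ t) => ?_
  -- `u + |u| ≤ 2|t|` trades the polynomial factor for half of the exponential decay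
  have hexp : exp (u / ε) * exp ((2 * ε)⁻¹ * |u|) ≤ exp (|t| / ε) * exp ((2 * ε)⁻¹ * u) := by
    rw [← exp_add, ← exp_add, exp_le_exp]
    have : u + |u| ≤ 2 * |t| := by
      rcases le_total 0 u with h | h
      · rw [abs_of_nonneg h]; linarith [le_abs_self t]
      · rw [abs_of_nonpos h]; linarith [abs_nonneg t]
    field_simp
    linarith
  calc ‖exp (u / ε) * f u‖ = exp (u / ε) * |f u| := by
        rw [norm_mul, norm_of_nonneg (exp_pos _).le, norm_eq_abs]
    _ ≤ exp (u / ε) * (D * ((1 + 2 * ε) * exp ((2 * ε)⁻¹ * |u|))) := by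
        gcongr
        exact (hfD u).trans (by gcongr; simpa using one_add_abs_le_mul_exp h2ε u)
    _ = D * (1 + 2 * ε) * (exp (u / ε) * exp ((2 * ε)⁻¹ * |u|)) := by ring
    _ ≤ D * (1 + 2 * ε) * (exp (|t| / ε) * exp ((2 * ε)⁻¹ * u)) := by gcongr
    _ = D * (1 + 2 * ε) * exp (|t| / ε) * exp ((2 * ε)⁻¹ * u) := by ring

lemma integral_exp_div_Iio_zero {ε : ℝ} (hε : 0 < ε) : ∫ s in Iio 0, exp (s / ε) = ε := by
  simp_rw [← integral_Iic_eq_integral_Iio, div_eq_inv_mul,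
    integral_exp_mul_Iic (inv_pos.2 hε), mul_zero, exp_zero, one_div, inv_inv]

lemma integrableOn_exp_div_Iio_zero {ε : ℝ} (hε : 0 < ε) :
    IntegrableOn (fun s => exp (s / ε)) (Iio 0) := by
  simpa only [div_eq_inv_mul] using
    (integrableOn_exp_mul_Iic (inv_pos.2 hε) 0).mono_set Iio_subset_Iic_self

lemma rpow_neg_three_halves_mul_self {ε : ℝ} (hε : 0 < ε) : ε ^ (-(3 / 2 : ℝ)) * ε = 1 / √ε := by
  rw [← rpow_add_one hε.ne', sqrt_eq_rpow, one_div, ← rpow_neg hε.le]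
  norm_num

lemma xiMap_comp_add_right (ε : ℝ) (f : ℝ → ℝ) (t : ℝ) :
    xiMap ε (fun s => f (s + t)) = -ε ^ (-(3 / 2 : ℝ)) * expConvolution ε f t := by
  have hshift : ∫ s in Iic 0, exp ((s + t) / ε) * f (s + t) = ∫ u in Iic t, exp (u / ε) * f u := by
    have h := (measurePreserving_add_right volume t).setIntegral_preimage_emb
      (measurableEmbedding_addRight t) (fun u => exp (u / ε) * f u) (Iic t)
    rwa [show (· + t) ⁻¹' Iic t = Iic 0 by ext; simp] at h
  have hexp : ∀ s, exp (s / ε) * f (s + t) = exp (-t / ε) * (exp ((s + t) / ε) * f (s + t)) :=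
    fun s => by rw [← mul_assoc, ← exp_add]; ring_nf
  simp only [xiMap, expConvolution, ← integral_Iic_eq_integral_Iio, hexp, integral_const_mul,
    hshift]

lemma xiMap_sub_const {ε : ℝ} (hε : 0 < ε) {f : ℝ → ℝ}
    (hf : IntegrableOn (fun s => exp (s / ε) * f s) (Iio 0)) (c : ℝ) :
    xiMap ε (fun s => f s - c) = xiMap ε f + 1 / √ε * c := by
  simp only [xiMap, mul_sub, integral_sub hf ((integrableOn_exp_div_Iio_zero hε).mul_const c),
    integral_mul_const, integral_exp_div_Iio_zero hε]
  rw [← rpow_neg_three_halves_mul_self hε]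
  ring

lemma abs_comp_add_right_le {ω : ℝ → ℝ} {C : ℝ} (hgrow : ∀ u, |ω u| ≤ C * (1 + |u|)) (t u : ℝ) :
    |ω (u + t)| ≤ C * (1 + |t|) * (1 + |u|) := by
  have hC : 0 ≤ C := by simpa using (abs_nonneg _).trans (hgrow 0)
  calc |ω (u + t)| ≤ C * (1 + |u + t|) := hgrow _
    _ ≤ C * (1 + |t|) * (1 + |u|) := by
      nlinarith [abs_add_le u t, mul_nonneg hC (mul_nonneg (abs_nonneg u) (abs_nonneg t))]

lemma integrableOn_exp_div_mul_comp_add {ε C : ℝ} (hε : 0 < ε) {ω : ℝ → ℝ} (hω : Continuous ω)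
    (hgrow : ∀ u, |ω u| ≤ C * (1 + |u|)) (t : ℝ) :
    IntegrableOn (fun s => exp (s / ε) * ω (s + t)) (Iio 0) :=
  (integrableOn_exp_div_mul_Iic hε (hω.comp (continuous_add_const t)).aestronglyMeasurable
    (abs_comp_add_right_le hgrow t) 0).mono_set Iio_subset_Iic_self

lemma integrableOn_exp_div_mul_wienerShift {ε C : ℝ} (hε : 0 < ε) {ω : ℝ → ℝ}
    (hω : Continuous ω) (hgrow : ∀ u, |ω u| ≤ C * (1 + |u|)) (t : ℝ) :
    IntegrableOn (fun s => exp (s / ε) * wienerShift t ω s) (Iio 0) := by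
  simp only [wienerShift, mul_sub]
  exact (integrableOn_exp_div_mul_comp_add hε hω hgrow t).sub
    ((integrableOn_exp_div_Iio_zero hε).mul_const (ω t))

lemma xiMap_wienerShift {ε C : ℝ} (hε : 0 < ε) {ω : ℝ → ℝ} (hω : Continuous ω)
    (hgrow : ∀ u, |ω u| ≤ C * (1 + |u|)) (t : ℝ) :
    xiMap ε (wienerShift t ω) = -ε ^ (-(3 / 2 : ℝ)) * expConvolution ε ω t + 1 / √ε * ω t := by
  rw [← xiMap_comp_add_right]
  exact xiMap_sub_const hε (integrableOn_exp_div_mul_comp_add hε hω hgrow t) (ω t)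

lemma hasDerivAt_integral_Iic {E : Type*} [NormedAddCommGroup E] [NormedSpace ℝ E]
    [CompleteSpace E] {F : ℝ → E} (hF : Continuous F) (hFi : ∀ t, IntegrableOn F (Iic t))
    (b : ℝ) : HasDerivAt (fun t => ∫ u in Iic t, F u) (F b) b := by
  have hsplit : (fun t => ∫ u in Iic t, F u) = fun t => (∫ u in Iic 0, F u) + ∫ u in 0..t, F u := by
    funext t
    rw [← intervalIntegral.integral_Iic_sub_Iic (hFi 0) (hFi t)]
    abel
  rw [hsplit]
  exact (hF.integral_hasStrictDerivAt 0 b).hasDerivAt.const_add _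

lemma hasDerivAt_expConvolution {ε : ℝ} {ω : ℝ → ℝ} (hω : Continuous ω)
    (hint : ∀ t, IntegrableOn (fun u => exp (u / ε) * ω u) (Iic t)) (b : ℝ) :
    HasDerivAt (expConvolution ε ω) (-(1 / ε) * expConvolution ε ω b + ω b) b := by
  have hexp : HasDerivAt (fun t => exp (-t / ε)) (exp (-b / ε) * (-(1 / ε))) b := by
    simpa [neg_div] using ((hasDerivAt_neg b).div_const ε).exp
  refine (hexp.mul (hasDerivAt_integral_Iic (by fun_prop) hint b)).congr_deriv ?_
  rw [expConvolution, ← mul_assoc (exp (-b / ε)), ← exp_add, neg_div, neg_add_cancel, exp_zero]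
  ring

lemma continuous_expConvolution {ε : ℝ} {ω : ℝ → ℝ} (hω : Continuous ω)
    (hint : ∀ t, IntegrableOn (fun u => exp (u / ε) * ω u) (Iic t)) :
    Continuous (expConvolution ε ω) :=
  continuous_iff_continuousAt.2 fun b => (hasDerivAt_expConvolution hω hint b).continuousAt

lemma expConvolution_sub_expConvolution_zero {ε : ℝ} {ω : ℝ → ℝ} (hω : Continuous ω)
    (hint : ∀ t, IntegrableOn (fun u => exp (u / ε) * ω u) (Iic t)) (t : ℝ) :
    expConvolution ε ω t - expConvolution ε ω 0
      = -(1 / ε) * (∫ s in 0..t, expConvolution ε ω s) + ∫ s in 0..t, ω s := by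
  have hg := continuous_expConvolution hω hint
  rw [← intervalIntegral.integral_eq_sub_of_hasDerivAt
      (fun b _ => hasDerivAt_expConvolution hω hint b) ((by fun_prop : Continuous fun s =>
        -(1 / ε) * expConvolution ε ω s + ω s).intervalIntegrable 0 t),
    intervalIntegral.integral_add ((hg.const_mul _).intervalIntegrable 0 t)
      (hω.intervalIntegrable 0 t), intervalIntegral.integral_const_mul]

theorem xiMap_shift_solves_fast_linear_equation_general
    (ε : ℝ) (hε : 0 < ε)
    (ω : ℝ → ℝ) (hcont : Continuous ω)
    (C : ℝ) (hgrow : ∀ t, |ω t| ≤ C * (1 + |t|)) :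
    (∀ t : ℝ, IntegrableOn (fun s => Real.exp (s / ε) * (wienerShift t ω) s) (Set.Iio 0)) ∧
    ∀ t : ℝ, xiMap ε (wienerShift t ω)
      = xiMap ε ω - (1 / ε) * (∫ s in (0 : ℝ)..t, xiMap ε (wienerShift s ω))
        + (1 / Real.sqrt ε) * ω t := by
  refine ⟨integrableOn_exp_div_mul_wienerShift hε hcont hgrow, fun t => ?_⟩
  have hint := integrableOn_exp_div_mul_Iic hε hcont.aestronglyMeasurable hgrow
  have hxi0 : xiMap ε ω = -ε ^ (-(3 / 2 : ℝ)) * expConvolution ε ω 0 := by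
    simpa using xiMap_comp_add_right ε ω 0
  have hI : ∫ s in 0..t, xiMap ε (wienerShift s ω)
      = -ε ^ (-(3 / 2 : ℝ)) * (∫ s in 0..t, expConvolution ε ω s) + 1 / √ε * ∫ s in 0..t, ω s := by
    simp_rw [xiMap_wienerShift hε hcont hgrow]
    rw [intervalIntegral.integral_add
        (((continuous_expConvolution hcont hint).const_mul _).intervalIntegrable 0 t)
        ((hcont.const_mul _).intervalIntegrable 0 t),
      intervalIntegral.integral_const_mul, intervalIntegral.integral_const_mul]
  rw [xiMap_wienerShift hε hcont hgrow, hxi0, hI]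
  -- the constants match because `ε ^ (-3/2) = ε⁻¹ * (1 / √ε)`
  linear_combination (-ε ^ (-(3 / 2 : ℝ))) * expConvolution_sub_expConvolution_zero hcont hint t
    - (∫ s in 0..t, ω s) * ε⁻¹ * rpow_neg_three_halves_mul_self hε
    + ε ^ (-(3 / 2 : ℝ)) * (∫ s in 0..t, ω s) * mul_inv_cancel₀ hε.ne'

/-- For `ε > 0` and a continuous path `ω` with `ω(0) = 0` of at most linear growth, the
integral defining `ξ^ε` converges absolutely along every shifted path, and the process
`t ↦ ξ^ε(θ_t ω)` solves pathwise the integral form of the fast linear equation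
`dξ^ε = −(1/ε) ξ^ε dt + (1/√ε) dW` along `ω`, for all time. -/
theorem xiMap_shift_solves_fast_linear_equation
    (ε : ℝ) (hε : 0 < ε)
    (ω : ℝ → ℝ) (hcont : Continuous ω) (h0 : ω 0 = 0)
    (C : ℝ) (hC : 0 ≤ C) (hgrow : ∀ t, |ω t| ≤ C * (1 + |t|)) :
    (∀ t : ℝ, IntegrableOn (fun s => Real.exp (s / ε) * (wienerShift t ω) s) (Set.Iio 0)) ∧
    ∀ t : ℝ, xiMap ε (wienerShift t ω)
      = xiMap ε ω - (1 / ε) * (∫ s in (0 : ℝ)..t, xiMap ε (wienerShift s ω))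
        + (1 / Real.sqrt ε) * ω t :=
  xiMap_shift_solves_fast_linear_equation_general ε hε ω hcont C hgrow
end
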